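/- arXiv:1504.06669 — 3 statements merged into one kernel-verified Lean document; each statement's English description precedes it below -/
import Mathlib

section
/- Let a, b, k be real numbers with b > a > 0 and k > 0, let α be a real number, set E = (kα − (k+1)a − (k−1)b)/(a² + 4ab + b²), and let Ψ be the polynomial Ψ(x) = ((b−x)(x−a)/(b−a))·[k(x+α) + E(b−x)(x−a)]. Then 2·Ψ(0) = α·Ψ'(0) if and only if α = −ab/(a+b) or α = −2ab·(a(k+1) + b(k−1))/(k(a+b)²). -/
open Polynomial

/-- With `E = (kα − (k+1)a − (k−1)b)/(a² + 4ab + b²)` and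
`Ψ(x) = ((b−x)(x−a)/(b−a))·[k(x+α) + E(b−x)(x−a)]`, the second normalization
condition `2Ψ(0) = αΨ'(0)` holds iff `α = −ab/(a+b)` or
`α = −2ab(a(k+1)+b(k−1))/(k(a+b)²)`. -/
theorem second_normalization_roots (a b k α : ℝ) (hab : b > a) (ha : a > 0) (hk : k > 0) :
    (let E : ℝ := (k * α - (k + 1) * a - (k - 1) * b) / (a ^ 2 + 4 * a * b + b ^ 2)
     let Ψ : Polynomial ℝ :=
       Polynomial.C ((b - a)⁻¹) * ((Polynomial.C b - Polynomial.X) * (Polynomial.X - Polynomial.C a)) *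
         (Polynomial.C k * (Polynomial.X + Polynomial.C α) +
           Polynomial.C E * ((Polynomial.C b - Polynomial.X) * (Polynomial.X - Polynomial.C a)))
     2 * Ψ.eval 0 = α * Ψ.derivative.eval 0)
    ↔ (α = -(a * b) / (a + b) ∨
        α = -(2 * a * b * (a * (k + 1) + b * (k - 1))) / (k * (a + b) ^ 2)) := by
  have hba : (0:ℝ) < b - a := by linarith
  have hab0 : (0:ℝ) < a + b := by linarith
  have hb : (0:ℝ) < b := ha.trans hab
  have hD : (0:ℝ) < a ^ 2 + 4 * a * b + b ^ 2 := by positivity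
  have hk2 : k * (a + b) ^ 2 ≠ 0 := mul_ne_zero hk.ne' (pow_ne_zero _ hab0.ne')
  simp only [eval_mul, eval_add, eval_C, eval_X, eval_sub, derivative_mul, derivative_add,
    derivative_C, derivative_X, derivative_sub, eval_zero, eval_one]
  rw [← sub_eq_zero]
  have hfac :
      2 *
        ((b - a)⁻¹ * ((b - 0) * (0 - a)) *
          (k * (0 + α) + (k * α - (k + 1) * a - (k - 1) * b) / (a ^ 2 + 4 * a * b + b ^ 2) * ((b - 0) * (0 - a)))) -
      α *
        ((0 * ((b - 0) * (0 - a)) + (b - a)⁻¹ * ((0 - 1) * (0 - a) + (b - 0) * (1 - 0))) *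
            (k * (0 + α) + (k * α - (k + 1) * a - (k - 1) * b) / (a ^ 2 + 4 * a * b + b ^ 2) * ((b - 0) * (0 - a))) +
          (b - a)⁻¹ * ((b - 0) * (0 - a)) *
            (0 * (0 + α) + k * (1 + 0) +
              (0 * ((b - 0) * (0 - a)) +
                (k * α - (k + 1) * a - (k - 1) * b) / (a ^ 2 + 4 * a * b + b ^ 2) *
                  ((0 - 1) * (0 - a) + (b - 0) * (1 - 0))))) =
      (((a + b) * α + a * b) * (k * (a + b) ^ 2 * α + 2 * a * b * ((k + 1) * a + (k - 1) * b))) *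
        (-(((b - a) * (a ^ 2 + 4 * a * b + b ^ 2))⁻¹)) := by
    field_simp
    ring
  rw [hfac, mul_eq_zero]
  have hc : (-(((b - a) * (a ^ 2 + 4 * a * b + b ^ 2))⁻¹)) ≠ 0 := neg_ne_zero.mpr (inv_ne_zero (mul_pos hba hD).ne')
  simp only [hc, or_false, mul_eq_zero]
  constructor
  · rintro (h | h)
    · left
      rw [eq_div_iff hab0.ne']
      linarith
    · right
      rw [eq_div_iff hk2]
      nlinarith [h]
  · rintro (h | h)
    · left
      rw [eq_div_iff hab0.ne'] at h
      linarith
    · right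
      rw [eq_div_iff hk2] at h
      nlinarith [h]
end

section
/- Let k ≥ 1 be a real number, let a, b be real numbers with b > a > 0, set α = −ab/(a+b) and E = (kα − (k+1)a − (k−1)b)/(a² + 4ab + b²). Then k(x+α) + E(b−x)(x−a) > 0 for every x ∈ [a, b]. -/
/-- With `α = −ab/(a+b)` and `E = (kα − (k+1)a − (k−1)b)/(a² + 4ab + b²)`, the
quadratic factor `k(x+α) + E(b−x)(x−a)` is positive on `[a, b]`. -/
theorem first_root_quadratic_factor_positive (k a b : ℝ) (hk : 1 ≤ k)
    (hab : b > a) (ha : a > 0) :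
    ∀ x ∈ Set.Icc a b,
      k * (x + (-(a * b) / (a + b))) +
        ((k * (-(a * b) / (a + b)) - (k + 1) * a - (k - 1) * b) / (a ^ 2 + 4 * a * b + b ^ 2)) *
          (b - x) * (x - a) > 0 := by
  intro x hx
  obtain ⟨hxa, hxb⟩ := hx
  have hb : b > 0 := lt_trans ha hab
  have hs : a + b > 0 := by linarith
  have hD : a ^ 2 + 4 * a * b + b ^ 2 > 0 := by positivity
  have hA : (a * b + (a + b) ^ 2) * x ^ 2 + a * b * (a + b) * x - a ^ 2 * b ^ 2 > 0 := by
    have h1 : (x - a) * ((a * b + (a + b) ^ 2) * (x + a) + a * b * (a + b)) ≥ 0 := by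
      apply mul_nonneg (by linarith)
      have hx0 : x ≥ a := hxa
      nlinarith
    nlinarith [mul_pos (mul_pos ha ha) hD]
  have key : k * (x + (-(a * b) / (a + b))) +
        ((k * (-(a * b) / (a + b)) - (k + 1) * a - (k - 1) * b) / (a ^ 2 + 4 * a * b + b ^ 2)) *
          (b - x) * (x - a)
      = (k * ((a * b + (a + b) ^ 2) * x ^ 2 + a * b * (a + b) * x - a ^ 2 * b ^ 2)
         + (b - a) * (a + b) * ((b - x) * (x - a)))
        / ((a + b) * (a ^ 2 + 4 * a * b + b ^ 2)) := by
    field_simp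
    ring
  rw [key]
  apply div_pos _ (by positivity)
  have h2 : (b - a) * (a + b) * ((b - x) * (x - a)) ≥ 0 := by
    apply mul_nonneg (by nlinarith)
    exact mul_nonneg (by linarith) (by linarith)
  nlinarith [mul_le_mul_of_nonneg_right hk hA.le]
end

section
/- Let a, b be real numbers with b > a > 0, set α = −4a²b/(a+b)² and E = (α − 2a)/(a² + 4ab + b²). Then (24/α)·(ab/(b−a))·(α − abE) = 12ab/(b−a), and this quantity is strictly positive. -/
/-- For the second family on the one-point blow-up of `CP₂`
(`α = −4a²b/(a+b)²`, `E = (α − 2a)/(a² + 4ab + b²)`), the scalar curvature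
`s_h = (24/α)(ab/(b−a))(α − abE)` equals `12ab/(b−a)`, and is strictly positive. -/
theorem scalar_curvature_second_family (a b : ℝ) (hab : b > a) (ha : a > 0) :
    (let α : ℝ := -(4 * a ^ 2 * b) / (a + b) ^ 2
     let E : ℝ := (α - 2 * a) / (a ^ 2 + 4 * a * b + b ^ 2)
     (24 / α) * (a * b / (b - a)) * (α - a * b * E) = 12 * a * b / (b - a) ∧
      0 < (24 / α) * (a * b / (b - a)) * (α - a * b * E)) := by
  have hb : (0:ℝ) < b := lt_trans ha hab
  have hab' : (0:ℝ) < b - a := by linarith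
  have hsum : a + b ≠ 0 := by positivity
  have hq : a ^ 2 + 4 * a * b + b ^ 2 ≠ 0 := by positivity
  have hα : -(4 * a ^ 2 * b) / (a + b) ^ 2 ≠ 0 := by
    apply div_ne_zero
    · have : (0:ℝ) < 4 * a ^ 2 * b := by positivity
      intro h; rw [neg_eq_zero] at h; linarith
    · positivity
  have heq : (24 / (-(4 * a ^ 2 * b) / (a + b) ^ 2)) * (a * b / (b - a)) *
      ((-(4 * a ^ 2 * b) / (a + b) ^ 2) - a * b *
        (((-(4 * a ^ 2 * b) / (a + b) ^ 2) - 2 * a) / (a ^ 2 + 4 * a * b + b ^ 2)))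
      = 12 * a * b / (b - a) := by
    field_simp
    ring
  refine ⟨heq, ?_⟩
  rw [heq]
  positivity
end
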